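/- arXiv:1106.0708 — 7 statements merged into one kernel-verified Lean document; each statement's English description precedes it below -/
import Mathlib

section
/- Let g : ℝ → ℝ be π-periodic, let m, n be positive integers, p = gcd(m,n), q = m/p, r = n/p, μ = π/n, and h(x) = ∏_{j=0}^{r−1} g(x + j·m·μ). Then for all x, ∏_{k=1}^{p} h(x + (k−1)μ) = ∏_{i=0}^{n−1} g(x + i·μ). -/
/-!
Write `G i = g (x + i μ)`; since `n μ = π`, `G` is `n`-periodic. The double product over
`k < p`, `j < r` collects the values `G (k + j m)`, and `(k, j) ↦ (k + j m) mod n` is a bijection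
onto `{0, …, n - 1}`: reducing mod `p` recovers `k`, and then `j m ≡ j' m [MOD n]` forces
`j ≡ j' [MOD n / p]`. There are `p r = n` pairs, so the two products agree factor by factor.
-/

open Real Finset

namespace Nat

theorem injOn_add_mul_mod {m n : ℕ} (hn : 0 < n) :
    Set.InjOn (fun z : ℕ × ℕ => (z.1 + z.2 * m) % n)
      (range (gcd m n) ×ˢ range (n / gcd m n) : Finset (ℕ × ℕ)) := by
  rintro ⟨k₁, j₁⟩ h₁ ⟨k₂, j₂⟩ h₂ (h : k₁ + j₁ * m ≡ k₂ + j₂ * m [MOD n])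
  simp only [coe_product, Set.mem_prod, mem_coe, mem_range] at h₁ h₂
  have h_mod_gcd (k j : ℕ) : k + j * m ≡ k [MOD gcd m n] := by
    simpa using (modEq_zero_iff_dvd.2 (dvd_mul_of_dvd_right (gcd_dvd_left m n) j)).add_left k
  have hk : k₁ = k₂ :=
    ((h_mod_gcd k₁ j₁).symm.trans ((h.of_dvd (gcd_dvd_right m n)).trans (h_mod_gcd k₂ j₂))
      ).eq_of_lt_of_lt h₁.1 h₂.1
  subst hk
  have hj : j₁ ≡ j₂ [MOD n / gcd n m] := (ModEq.add_left_cancel' k₁ h).cancel_right_div_gcd hn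
  rw [gcd_comm] at hj
  exact Prod.ext rfl (hj.eq_of_lt_of_lt h₁.2 h₂.2)

theorem image_add_mul_mod {m n : ℕ} (hn : 0 < n) :
    (range (gcd m n) ×ˢ range (n / gcd m n)).image (fun z : ℕ × ℕ => (z.1 + z.2 * m) % n) =
      range n := by
  refine eq_of_subset_of_card_le (fun i hi => ?_) ?_
  · obtain ⟨z, -, rfl⟩ := mem_image.1 hi
    exact mem_range.2 (mod_lt _ hn)
  · rw [Finset.card_image_of_injOn (injOn_add_mul_mod hn), card_product, Finset.card_range,
      Finset.card_range, Finset.card_range, Nat.mul_div_cancel' (gcd_dvd_right m n)]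

end Nat

theorem Function.Periodic.prod_range_gcd_prod_range {M : Type*} [CommMonoid M] {G : ℕ → M}
    {n : ℕ} (hG : Function.Periodic G n) (m : ℕ) :
    ∏ k ∈ range (Nat.gcd m n), ∏ j ∈ range (n / Nat.gcd m n), G (k + j * m) =
      ∏ i ∈ range n, G i := by
  rcases n.eq_zero_or_pos with rfl | hn
  · simp
  rw [← Nat.image_add_mul_mod (m := m) hn, prod_image (Nat.injOn_add_mul_mod hn),
    prod_product]
  simp only [hG.map_mod_nat]

theorem stmt_5_general (g : ℝ → ℝ) (hper : ∀ x, g (x + π) = g x)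
    (m n : ℕ) :
    let p := Nat.gcd m n
    let r := n / p
    let μ := π / n
    let h : ℝ → ℝ := fun x => ∏ j ∈ Finset.range r, g (x + j * m * μ)
    ∀ x, ∏ k ∈ Finset.range p, h (x + k * μ) = ∏ i ∈ Finset.range n, g (x + i * μ) := by
  intro p r μ h x
  have hG : Function.Periodic (fun i : ℕ => g (x + i * μ)) n := by
    intro i
    rcases eq_or_ne n 0 with rfl | hn
    · simp
    have hnμ : (n : ℝ) * μ = π := mul_div_cancel₀ π (Nat.cast_ne_zero.2 hn)
    simp only [Nat.cast_add, add_mul, hnμ, ← add_assoc, hper]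
  rw [← hG.prod_range_gcd_prod_range m]
  refine prod_congr rfl fun k _ => prod_congr rfl fun j _ => ?_
  push_cast
  ring_nf

theorem stmt_5 (g : ℝ → ℝ) (hper : ∀ x, g (x + π) = g x)
    (m n : ℕ) (hm : 0 < m) (hn : 0 < n) :
    let p := Nat.gcd m n
    let r := n / p
    let μ := π / n
    let h : ℝ → ℝ := fun x => ∏ j ∈ Finset.range r, g (x + j * m * μ)
    ∀ x, ∏ k ∈ Finset.range p, h (x + k * μ) = ∏ i ∈ Finset.range n, g (x + i * μ) :=
  stmt_5_general g hper m n
end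

section
/- Let g : ℝ → ℝ be π-periodic, let m, n be positive integers, p = gcd(m,n), r = n/p, μ = π/n, and h(x) = ∏_{j=0}^{r−1} g(x + j·m·μ). Then for all x, ∏_{i=0}^{n−1} g(x + m·i·μ) = h(x)^p. -/
open Real

/-!
Since `m * (n / p) / n = m / p` is an integer, the factor `i ↦ g (x + m i π / n)` is periodic
in `i` with period `r = n / p`, so the `n = p r` factors split into `p` equal blocks of `r`.
-/

theorem Function.Periodic.prod_range_mul {M : Type*} [CommMonoid M] {f : ℕ → M} {r : ℕ}
    (hf : Function.Periodic f r) (k : ℕ) :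
    ∏ i ∈ Finset.range (k * r), f i = (∏ i ∈ Finset.range r, f i) ^ k := by
  induction k with
  | zero => simp
  | succ k ih =>
    rw [add_mul, one_mul, Finset.prod_range_add, ih, pow_succ]
    congr 1
    refine Finset.prod_congr rfl fun j _ => ?_
    rw [add_comm]
    exact hf.nat_mul k j

theorem mul_div_gcd_mul_div_eq {K : Type*} [Field K] [CharZero K] {m n : ℕ} (hn : n ≠ 0)
    (c : K) : (m : K) * ↑(n / m.gcd n) * (c / n) = ↑(m / m.gcd n) * c := by
  have hp : ((m.gcd n : ℕ) : K) ≠ 0 := Nat.cast_ne_zero.mpr (Nat.gcd_ne_zero_right hn)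
  rw [Nat.cast_div (Nat.gcd_dvd_right m n) hp, Nat.cast_div (Nat.gcd_dvd_left m n) hp]
  field_simp

theorem Function.Periodic.periodic_nat_mul_div {g : ℝ → ℝ} {c : ℝ} (hg : Function.Periodic g c)
    (m n : ℕ) (x : ℝ) :
    Function.Periodic (fun i : ℕ => g (x + m * i * (c / n))) (n / m.gcd n) := by
  rcases eq_or_ne n 0 with rfl | hn
  · simp [Function.Periodic]
  intro i
  have hstep :
      x + m * ↑(i + n / m.gcd n) * (c / n) = x + m * i * (c / n) + ↑(m / m.gcd n) * c := by
    rw [← mul_div_gcd_mul_div_eq hn c]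
    push_cast
    ring
  simp only [hstep, hg.nat_mul _ _]

theorem stmt_6_general (g : ℝ → ℝ) (hper : ∀ x, g (x + π) = g x)
    (m n : ℕ) :
    let p := Nat.gcd m n
    let r := n / p
    let μ := π / n
    let h : ℝ → ℝ := fun x => ∏ j ∈ Finset.range r, g (x + j * m * μ)
    ∀ x, ∏ i ∈ Finset.range n, g (x + m * i * μ) = (h x) ^ p := by
  intro p r μ h x
  have hnpr : n = p * r := (Nat.mul_div_cancel' (Nat.gcd_dvd_right m n)).symm
  rw [hnpr, (Function.Periodic.periodic_nat_mul_div hper m n x).prod_range_mul p]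
  simp only [h, μ, r, p, mul_comm (m : ℝ)]

theorem stmt_6 (g : ℝ → ℝ) (hper : ∀ x, g (x + π) = g x)
    (m n : ℕ) (hm : 0 < m) (hn : 0 < n) :
    let p := Nat.gcd m n
    let r := n / p
    let μ := π / n
    let h : ℝ → ℝ := fun x => ∏ j ∈ Finset.range r, g (x + j * m * μ)
    ∀ x, ∏ i ∈ Finset.range n, g (x + m * i * μ) = (h x) ^ p :=
  stmt_6_general g hper m n
end

section
/- Let g : ℝ → ℝ be π-periodic, and let m, n be positive integers with p = gcd(m,n) and r = n/p. Then for all x, ∏_{j=0}^{r−1} g(x + m·j·π/n) = ∏_{j=0}^{r−1} g(x + j·π/r). -/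
open Real

theorem stmt_7 (g : ℝ → ℝ) (hper : ∀ x, g (x + π) = g x)
    (m n : ℕ) (hm : 0 < m) (hn : 0 < n) :
    let p := Nat.gcd m n
    let r := n / p
    ∀ x, ∏ j ∈ Finset.range r, g (x + m * j * π / n) = ∏ j ∈ Finset.range r, g (x + j * π / r) := by
  intro p r x
  have hper' : ∀ (k : ℕ) (y : ℝ), g (y + k * π) = g y := by
    intro k
    induction k with
    | zero => intro y; simp
    | succ k ih =>
      intro y
      have : ((k : ℝ) + 1) * π = k * π + π := by ring
      push_cast
      rw [this, ← add_assoc, hper, ih]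
  have hp : 0 < p := Nat.gcd_pos_of_pos_left _ hm
  have hr : 0 < r := Nat.div_pos (Nat.le_of_dvd hn (Nat.gcd_dvd_right m n)) hp
  set m' := m / p with hm'
  have hco : Nat.Coprime m' r := Nat.coprime_div_gcd_div_gcd hp
  have hmm : p * m' = m := Nat.mul_div_cancel' (Nat.gcd_dvd_left m n) |>.symm ▸ rfl
  have hnn : p * r = n := Nat.mul_div_cancel' (Nat.gcd_dvd_right m n)
  have hmm' : p * m' = m := Nat.mul_div_cancel' (Nat.gcd_dvd_left m n)
  -- step 1: rewrite each term
  have step1 : ∀ j : ℕ, g (x + m * j * π / n) = g (x + ((m' * j) % r : ℕ) * π / r) := by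
    intro j
    have h1 : (m : ℝ) * j * π / n = (m' : ℝ) * j * π / r := by
      rw [← hmm', ← hnn]
      push_cast
      have hp0 : (p : ℝ) ≠ 0 := by positivity
      have hr0 : (r : ℝ) ≠ 0 := by positivity
      field_simp
    have h2 : m' * j = r * (m' * j / r) + (m' * j % r) := (Nat.div_add_mod _ _).symm
    have h3 : (m' : ℝ) * j * π / r = ((m' * j % r : ℕ) : ℝ) * π / r + ((m' * j / r : ℕ) : ℝ) * π := by
      have hcast : ((m' : ℝ) * j) = (r : ℝ) * ((m' * j / r : ℕ) : ℝ) + ((m' * j % r : ℕ) : ℝ) := by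
        exact_mod_cast h2
      rw [hcast]
      have hr0 : (r : ℝ) ≠ 0 := by positivity
      field_simp
      ring
    rw [h1, h3, ← add_assoc]
    exact hper' _ _
  rw [Finset.prod_congr rfl (fun j _ => step1 j)]
  -- step 2: bijection
  have hinj : Set.InjOn (fun j => m' * j % r) (Finset.range r) := by
    intro a ha b hb hab
    simp only [Finset.coe_range, Set.mem_Iio] at ha hb
    have : a ≡ b [MOD r] := Nat.ModEq.cancel_left_of_coprime hco.symm hab
    have := this.eq_of_lt_of_lt ha hb
    exact this
  have himg : (Finset.range r).image (fun j => m' * j % r) = Finset.range r := by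
    apply Finset.eq_of_subset_of_card_le
    · intro k hk
      simp only [Finset.mem_image, Finset.mem_range] at hk ⊢
      obtain ⟨j, _, rfl⟩ := hk
      exact Nat.mod_lt _ hr
    · rw [Finset.card_image_of_injOn hinj]
  conv_rhs => rw [← himg]
  rw [Finset.prod_image (fun a ha b hb h => hinj (Finset.mem_coe.mpr ha) (Finset.mem_coe.mpr hb) h)]
end

section
/- Let m, n be positive integers with p = gcd(m,n). Define G̃(m,n) = (1/π) ∫_{-π/2}^{π/2} ∏_{i=0}^{n−1} sin(x + m·i·π/n)^2 dx. Then G̃(m,n) = 2^p · (2p−1)!! / (4^n · p!). -/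
open Real Finset MeasureTheory Function
open scoped Nat

/-!
Write `p = gcd m n`, `n = q p` and `m = a p` with `a` coprime to `q`. Since `sin²` has period `π`,
the `i`-th factor is `sin² (x + (a i mod q) π / q)`; as `i` runs over `range (p q)` the
residue `a i mod q` runs `p` times through `range q`, so the integrand is
`(∏_{j<q} sin² (x + j π / q))^p`.
The classical product formula `∏_{j<q} sin² (x + j π / q) = sin² (q x) / 4^(q-1)` follows from
`∏_{j<q} (1 - ζ^j y) = 1 - y^q` for a primitive `q`-th root of unity `ζ` and
`‖1 - exp (2 i θ)‖ = 2 |sin θ|`. What remains is the integral of `sin^(2p) (q x)` over a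
period, which is Wallis' integral.
-/

namespace Function.Periodic

variable {M : Type*} [CommMonoid M] {f : ℕ → M} {q : ℕ}

theorem prod_range_mul_s9 (hf : Periodic f q) (p : ℕ) :
    ∏ i ∈ range (p * q), f i = (∏ i ∈ range q, f i) ^ p := by
  induction p with
  | zero => simp
  | succ p ih =>
    rw [add_mul, one_mul, prod_range_add, ih, pow_succ]
    congr 1
    exact prod_congr rfl fun i _ => by rw [add_comm, ← smul_eq_mul, hf.nsmul]

theorem prod_range_comp_mul_of_coprime (hf : Periodic f q) {a : ℕ} (ha : a.Coprime q) :
    ∏ i ∈ range q, f (a * i) = ∏ i ∈ range q, f i := by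
  have hinj : Set.InjOn (fun i => a * i % q) (range q) := fun i hi j hj hij =>
    (Nat.ModEq.cancel_left_of_coprime ha.symm hij).eq_of_lt_of_lt (mem_range.1 hi)
      (mem_range.1 hj)
  have himage : (range q).image (fun i => a * i % q) = range q :=
    eq_of_subset_of_card_le
      (image_subset_iff.2 fun i hi =>
        mem_range.2 (Nat.mod_lt _ (Nat.zero_lt_of_lt (mem_range.1 hi))))
      (card_image_of_injOn hinj).ge
  calc ∏ i ∈ range q, f (a * i)
      = ∏ i ∈ range q, f (a * i % q) := by simp only [hf.map_mod_nat]
    _ = ∏ i ∈ range q, f i := by rw [← prod_image hinj, himage]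

theorem prod_range_mul_comp_mul_of_coprime (hf : Periodic f q) {a : ℕ} (ha : a.Coprime q)
    (p : ℕ) : ∏ i ∈ range (p * q), f (a * i) = (∏ i ∈ range q, f i) ^ p := by
  have hfa : Periodic (fun i => f (a * i)) q := fun i => by
    simpa [mul_add] using hf.nat_mul a (a * i)
  rw [hfa.prod_range_mul_s9, hf.prod_range_comp_mul_of_coprime ha]

end Function.Periodic

theorem IsPrimitiveRoot.prod_one_sub_pow_mul {R : Type*} [CommRing R] [IsDomain R] {ζ : R}
    {q : ℕ} (hζ : IsPrimitiveRoot ζ q) (hq : 0 < q) (y : R) :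
    ∏ j ∈ range q, (1 - ζ ^ j * y) = 1 - y ^ q := by
  have : NeZero q := ⟨hq.ne'⟩
  conv_rhs => rw [← one_pow q, hζ.pow_sub_pow_eq_prod_sub_mul 1 y hq]
  refine prod_nbij (ζ ^ ·) (fun j _ => ?_) (fun i hi j hj hij => ?_) (fun μ hμ => ?_)
    fun _ _ => rfl
  · rw [Polynomial.mem_nthRootsFinset hq, ← pow_mul, mul_comm, pow_mul, hζ.pow_eq_one, one_pow]
  · exact hζ.pow_inj (mem_range.1 hi) (mem_range.1 hj) hij
  · rw [mem_coe, Polynomial.mem_nthRootsFinset hq] at hμ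
    obtain ⟨j, hj, rfl⟩ := hζ.eq_pow_of_pow_eq_one hμ
    exact ⟨j, mem_range.2 hj, rfl⟩

theorem prod_sin_sq_add_mul_pi_div {q : ℕ} (hq : 0 < q) (x : ℝ) :
    ∏ j ∈ range q, sin (x + j * π / q) ^ 2 = sin (q * x) ^ 2 / 4 ^ (q - 1) := by
  have hnorm (θ : ℝ) : 4 * sin θ ^ 2 = ‖1 - Complex.exp (Complex.I * ↑(2 * θ))‖ ^ 2 := by
    rw [norm_sub_rev, Complex.norm_exp_I_mul_ofReal_sub_one, Real.norm_eq_abs, sq_abs]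
    ring_nf
  set ζ := Complex.exp (2 * π * Complex.I / q)
  have hζ : IsPrimitiveRoot ζ q := Complex.isPrimitiveRoot_exp q hq.ne'
  have hexp (j : ℕ) : Complex.exp (Complex.I * ↑(2 * (x + j * π / q)))
      = ζ ^ j * Complex.exp (Complex.I * ↑(2 * x)) := by
    rw [← Complex.exp_nat_mul, ← Complex.exp_add]
    congr 1
    push_cast
    field_simp
    ring
  have h4 : 4 ^ q * ∏ j ∈ range q, sin (x + j * π / q) ^ 2 = 4 * sin (q * x) ^ 2 :=
    calc 4 ^ q * ∏ j ∈ range q, sin (x + j * π / q) ^ 2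
        = ∏ j ∈ range q, ‖1 - Complex.exp (Complex.I * ↑(2 * (x + j * π / q)))‖ ^ 2 := by
          simp only [← hnorm, prod_mul_distrib, prod_const, card_range]
      _ = ‖∏ j ∈ range q, (1 - ζ ^ j * Complex.exp (Complex.I * ↑(2 * x)))‖ ^ 2 := by
          simp only [hexp, norm_prod, prod_pow]
      _ = ‖1 - Complex.exp (Complex.I * ↑(2 * x)) ^ q‖ ^ 2 := by
          rw [hζ.prod_one_sub_pow_mul hq]
      _ = 4 * sin (q * x) ^ 2 := by
          rw [← Complex.exp_nat_mul, hnorm]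
          push_cast
          ring_nf
  obtain ⟨r, rfl⟩ := Nat.exists_eq_add_of_lt hq
  rw [eq_div_iff (by positivity)]
  simp only [zero_add, add_tsub_cancel_right, pow_succ] at h4 ⊢
  linarith

theorem Function.Periodic.intervalIntegral_comp_nat_mul {E : Type*} [NormedAddCommGroup E]
    [NormedSpace ℝ E] {f : ℝ → E} {T : ℝ} (hf : Periodic f T)
    (hfi : ∀ t₁ t₂, IntervalIntegrable f volume t₁ t₂) {q : ℕ} (hq : 0 < q)
    (t s : ℝ) :
    ∫ x in t..t + T, f (q * x) = ∫ x in s..s + T, f x := by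
  have hq' : (q : ℝ) ≠ 0 := by positivity
  rw [intervalIntegral.integral_comp_mul_left f hq',
    show (q : ℝ) * (t + T) = q * t + (q : ℤ) • T by push_cast [zsmul_eq_mul]; ring,
    hf.intervalIntegral_add_zsmul_eq _ _ hfi, hf.intervalIntegral_add_eq _ s,
    ← Int.cast_smul_eq_zsmul ℝ, Int.cast_natCast, smul_smul, inv_mul_cancel₀ hq', one_smul]

theorem prod_range_two_mul_add_one_div_two_mul_add_two (p : ℕ) :
    ∏ i ∈ range p, ((2 * i + 1 : ℝ) / (2 * i + 2)) = (2 * p - 1)‼ / (2 ^ p * p !) := by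
  induction p with
  | zero => simp
  | succ p ih =>
    have hdf : (2 * (p + 1) - 1)‼ = (2 * p + 1) * (2 * p - 1)‼ := by
      rw [show 2 * (p + 1) - 1 = 2 * p + 1 by omega, Nat.doubleFactorial_add_one]
    rw [prod_range_succ, ih, hdf, Nat.factorial_succ]
    push_cast
    field_simp
    ring

theorem integral_sin_pow_two_mul (p : ℕ) :
    ∫ x in 0..π, sin x ^ (2 * p) = π * (2 * p - 1)‼ / (2 ^ p * p !) := by
  rw [integral_sin_pow_even, prod_range_two_mul_add_one_div_two_mul_add_two, mul_div_assoc]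

theorem prod_range_sin_sq_add_mul_pi_div {a q : ℕ} (hq : 0 < q) (ha : a.Coprime q) (p : ℕ)
    (x : ℝ) : ∏ i ∈ range (p * q), sin (x + (a * i : ℕ) * π / q) ^ 2
      = (sin (q * x) ^ 2 / 4 ^ (q - 1)) ^ p := by
  have hf : Periodic (fun j : ℕ => sin (x + j * π / q) ^ 2) q := fun j => by
    dsimp only
    rw [Nat.cast_add, add_mul, add_div, mul_div_cancel_left₀ π (by positivity : (q : ℝ) ≠ 0),
      ← add_assoc, sin_add_pi, neg_sq]
  rw [hf.prod_range_mul_comp_mul_of_coprime ha, prod_sin_sq_add_mul_pi_div hq]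

theorem integral_sin_nat_mul_pow_two_mul {q : ℕ} (hq : 0 < q) (p : ℕ) :
    ∫ x in -(π / 2)..π / 2, sin (q * x) ^ (2 * p) = π * (2 * p - 1)‼ / (2 ^ p * p !) := by
  have hP : Periodic (fun y => sin y ^ (2 * p)) π := fun y => by
    simp only [sin_add_pi, Even.neg_pow (even_two_mul p)]
  have h := hP.intervalIntegral_comp_nat_mul
    (fun _ _ => (continuous_sin.pow _).intervalIntegrable _ _) hq (-(π / 2)) 0
  rwa [zero_add, neg_add_eq_sub, sub_half, integral_sin_pow_two_mul] at h

theorem stmt_9_general (m n : ℕ) (hn : 0 < n) :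
    let p := Nat.gcd m n
    (1 / π) * ∫ x in (-(π/2))..(π/2), ∏ i ∈ Finset.range n, Real.sin (x + m * i * π / n) ^ 2
      = 2 ^ p * (Nat.doubleFactorial (2 * p - 1) : ℝ) / (4 ^ n * Nat.factorial p) := by
  intro p
  obtain ⟨a, q, hco, hma, hnq⟩ : ∃ a q, a.Coprime q ∧ m = a * p ∧ n = q * p :=
    Nat.exists_coprime m n
  have hp : 0 < p := Nat.gcd_pos_of_pos_right m hn
  have hq : 0 < q := Nat.pos_of_mul_pos_right (hnq ▸ hn)
  have hintegrand (x : ℝ) : ∏ i ∈ range n, sin (x + m * i * π / n) ^ 2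
      = (sin (q * x) ^ 2 / 4 ^ (q - 1)) ^ p := by
    rw [← prod_range_sin_sq_add_mul_pi_div hq hco, hnq, mul_comm q p]
    refine prod_congr rfl fun i _ => ?_
    rw [hma]
    push_cast
    congr 2
    field_simp
  have h4 : (4 : ℝ) ^ n = (4 ^ (q - 1)) ^ p * 2 ^ p * 2 ^ p := by
    rw [hnq, pow_mul, ← mul_pow, ← mul_pow, mul_assoc, show (2 : ℝ) * 2 = 4 by norm_num,
      ← pow_succ, Nat.sub_add_cancel hq]
  simp only [hintegrand, div_pow, ← pow_mul, intervalIntegral.integral_div,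
    integral_sin_nat_mul_pow_two_mul hq]
  field_simp
  rw [h4]
  ring

theorem stmt_9 (m n : ℕ) (hm : 0 < m) (hn : 0 < n) :
    let p := Nat.gcd m n
    (1 / π) * ∫ x in (-(π/2))..(π/2), ∏ i ∈ Finset.range n, Real.sin (x + m * i * π / n) ^ 2
      = 2 ^ p * (Nat.doubleFactorial (2 * p - 1) : ℝ) / (4 ^ n * Nat.factorial p) :=
  stmt_9_general m n hn
end

section
/- For every positive integer n, (1/π) ∫_{-π/2}^{π/2} ∏_{i=0}^{n−1} sin(x + i·π/n)^2 dx = 2/4^n. -/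
/-!
Since `|2 sin θ| = |e^{2iθ} - 1|` and the numbers `e^{2i(x + kπ/n)}` are `u ζ^k` with
`u = e^{2ix}` and `ζ` a primitive `n`-th root of unity, the factorisation `∏ (u - ζ^{-k}) = u^n - 1`
gives `∏ |2 sin (x + kπ/n)| = |2 sin (n x)|`. Hence the integrand is `4 sin² (n x) / 4^n`, and
`sin² (n x)` has mean `1/2` over any interval of length `π`.
-/

open Real MeasureTheory

theorem IsPrimitiveRoot.prod_sub_pow {R : Type*} [CommRing R] [IsDomain R] {n : ℕ} {ξ : R}
    (hξ : IsPrimitiveRoot ξ n) (hn : 0 < n) (z : R) :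
    ∏ k ∈ Finset.range n, (z - ξ ^ k) = z ^ n - 1 := by
  simpa [Polynomial.eval_prod] using
    (congrArg (Polynomial.eval z) (X_pow_sub_C_eq_prod hξ hn (one_pow n))).symm

theorem Real.prod_abs_two_mul_sin_add (n : ℕ) (hn : 0 < n) (x : ℝ) :
    ∏ k ∈ Finset.range n, |2 * sin (x + k * π / n)| = |2 * sin (n * x)| := by
  set ζ := Complex.exp (2 * π * Complex.I / n)
  set u := Complex.exp (Complex.I * ↑(2 * x))
  have norm_two_mul_sin (θ : ℝ) : |2 * sin θ| = ‖Complex.exp (Complex.I * ↑(2 * θ)) - 1‖ := by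
    rw [Complex.norm_exp_I_mul_ofReal_sub_one, mul_div_cancel_left₀ _ two_ne_zero, Real.norm_eq_abs]
  have hζ : ‖ζ‖ = 1 := by
    rw [Complex.norm_exp]; simp
  have factor (k : ℕ) : ‖Complex.exp (Complex.I * ↑(2 * (x + k * π / n))) - 1‖ = ‖u - ζ⁻¹ ^ k‖ := by
    have : Complex.exp (Complex.I * ↑(2 * (x + k * π / n))) - 1 = ζ ^ k * (u - ζ⁻¹ ^ k) := by
      rw [mul_sub, inv_pow, mul_inv_cancel₀ (pow_ne_zero _ (Complex.exp_ne_zero _)),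
        ← Complex.exp_nat_mul, ← Complex.exp_add]
      congr 2
      push_cast
      field_simp
      ring
    rw [this, norm_mul, norm_pow, hζ, one_pow, one_mul]
  calc ∏ k ∈ Finset.range n, |2 * sin (x + k * π / n)|
      = ∏ k ∈ Finset.range n, ‖u - ζ⁻¹ ^ k‖ := by
        simp only [norm_two_mul_sin, factor]
    _ = ‖u ^ n - 1‖ := by
        rw [← norm_prod, (Complex.isPrimitiveRoot_exp n hn.ne').inv.prod_sub_pow hn]
    _ = |2 * sin (n * x)| := by
        rw [norm_two_mul_sin, ← Complex.exp_nat_mul]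
        push_cast
        ring_nf

theorem Real.prod_sin_sq_add (n : ℕ) (hn : 0 < n) (x : ℝ) :
    ∏ k ∈ Finset.range n, sin (x + k * π / n) ^ 2 = 4 * sin (n * x) ^ 2 / 4 ^ n := by
  have h := congrArg (· ^ 2) (prod_abs_two_mul_sin_add n hn x)
  simp only [← Finset.prod_pow, sq_abs, mul_pow, Finset.prod_mul_distrib, Finset.prod_const,
    Finset.card_range] at h
  rw [eq_div_iff (by positivity)]
  linear_combination h

theorem integral_sin_nat_mul_sq (n : ℕ) (hn : n ≠ 0) (a : ℝ) :
    ∫ x in a..a + π, sin (n * x) ^ 2 = π / 2 := by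
  have hn0 : (n : ℝ) ≠ 0 := Nat.cast_ne_zero.mpr hn
  have sin_mul_cos (y : ℝ) : sin y * cos y = sin (2 * y) / 2 := by
    rw [sin_two_mul]; ring
  rw [intervalIntegral.integral_comp_mul_left (fun y => sin y ^ 2) hn0, integral_sin_sq,
    sin_mul_cos, sin_mul_cos, smul_eq_mul,
    show 2 * (n * (a + π)) = 2 * (n * a) + n * (2 * π) by ring, sin_add_nat_mul_two_pi]
  field_simp
  ring

theorem stmt_10 (n : ℕ) (hn : 0 < n) :
    (1 / π) * ∫ x in (-(π/2))..(π/2), ∏ i ∈ Finset.range n, Real.sin (x + i * π / n) ^ 2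
      = 2 / 4 ^ n := by
  simp_rw [prod_sin_sq_add n hn, div_eq_mul_inv _ ((4 : ℝ) ^ n),
    intervalIntegral.integral_mul_const, intervalIntegral.integral_const_mul]
  have h := integral_sin_nat_mul_sq n hn.ne' (-(π / 2))
  rw [show -(π / 2) + π = π / 2 by ring] at h
  rw [h]
  field_simp
  ring
end

section
/- Let g : ℝ → ℝ be continuously differentiable, even, and π-periodic, let n ≥ 1, and define G(μ₀,…,μ_{n−1}) = (1/π) ∫_{-π/2}^{π/2} ∏_{i=0}^{n−1} g(x + μ_i) dx. Then for each i, ∂G/∂μ_i = (1/(2π)) ∫_{-π/2}^{π/2} g′(x) [∏_{j≠i} g(x + μ_j − μ_i) − ∏_{j≠i} g(x − μ_j + μ_i)] dx. -/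
open Real MeasureTheory intervalIntegral Metric Finset

/-!
Only the factor `g (x + μ i)` depends on `μ i`, so differentiating under the integral gives
`(1/π) ∫ g'(x + μ i) ∏_{j ≠ i} g (x + μ j) dx`. Writing `A x = g' x ∏_{j ≠ i} g (x + μ j - μ i)`,
π-periodicity lets us shift the variable by `μ i`, turning this into `(1/π) ∫ A`. Since `g` is
even, `g'` is odd and the second product in the claimed integrand is `-A (-x)`; the symmetric
interval then gives `∫ (A x + A (-x)) = 2 ∫ A`.
-/

theorem Finset.prod_comp_update_eq_mul_prod_erase {ι β M : Type*} [Fintype ι] [DecidableEq ι]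
    [CommMonoid M] (h : β → M) (μ : ι → β) (i : ι) (t : β) :
    ∏ j, h (Function.update μ i t j) = h t * ∏ j ∈ univ.erase i, h (μ j) := by
  have := prod_update_of_mem (mem_univ i) (h ∘ μ) (h t)
  rw [← Function.comp_update] at this
  simpa [sdiff_singleton_eq_erase] using this

section
variable {𝕜 F : Type*} [NontriviallyNormedField 𝕜] [NormedAddCommGroup F] [NormedSpace 𝕜 F]
  {f : 𝕜 → F}

theorem Function.Periodic.deriv {c : 𝕜} (hf : Function.Periodic f c) :
    Function.Periodic (deriv f) c := fun x => by
  rw [← deriv_comp_add_const, funext hf]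

theorem Function.Even.deriv (hf : Function.Even f) : Function.Odd (deriv f) := fun x => by
  simpa [funext hf] using deriv_comp_neg f (-x)
end

theorem Function.Periodic.intervalIntegral_comp_add_right {E : Type*} [NormedAddCommGroup E]
    [NormedSpace ℝ E] {f : ℝ → E} {T : ℝ} (hf : Function.Periodic f T) (a c : ℝ) :
    ∫ x in a..a + T, f (x + c) = ∫ x in a..a + T, f x := by
  rw [integral_comp_add_right, add_right_comm, hf.intervalIntegral_add_eq (a + c) a]

theorem intervalIntegral.integral_add_comp_neg {E : Type*} [NormedAddCommGroup E]
    [NormedSpace ℝ E] {f : ℝ → E} {a : ℝ} (hf : IntervalIntegrable f volume (-a) a) :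
    ∫ x in -a..a, (f x + f (-x)) = (2 : ℝ) • ∫ x in -a..a, f x := by
  have hf_neg : IntervalIntegrable (fun x => f (-x)) volume (-a) a := by
    simpa using ((IntervalIntegrable.iff_comp_neg).mp hf).symm
  rw [integral_add hf hf_neg, integral_comp_neg, neg_neg, two_smul]

theorem hasDerivAt_intervalIntegral_comp_add_mul {f P : ℝ → ℝ} (hf : ContDiff ℝ 1 f)
    (hP : Continuous P) (a b t₀ : ℝ) :
    HasDerivAt (fun t => ∫ x in a..b, f (x + t) * P x)
      (∫ x in a..b, deriv f (x + t₀) * P x) t₀ := by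
  have hf_cont : Continuous f := hf.continuous
  have hf' : Continuous (deriv f) := hf.continuous_deriv le_rfl
  have hF' : Continuous fun p : ℝ × ℝ => deriv f (p.1 + p.2) * P p.1 := by fun_prop
  obtain ⟨C, hC⟩ := (isCompact_uIcc.prod (isCompact_closedBall t₀ 1)).exists_bound_of_continuousOn
    hF'.continuousOn
  refine (hasDerivAt_integral_of_dominated_loc_of_deriv_le (μ := volume)
    (F := fun t x => f (x + t) * P x) (F' := fun t x => deriv f (x + t) * P x) (bound := fun _ => C)
    (ball_mem_nhds t₀ one_pos) ?_ ?_ ?_ ?_ intervalIntegrable_const ?_).2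
  · exact .of_forall fun t => by fun_prop
  · exact (by fun_prop : Continuous fun x => f (x + t₀) * P x).intervalIntegrable _ _
  · exact (by fun_prop : Continuous fun x => deriv f (x + t₀) * P x).aestronglyMeasurable
  · exact .of_forall fun x hx t ht =>
      hC (x, t) ⟨Set.uIoc_subset_uIcc hx, ball_subset_closedBall ht⟩
  · exact .of_forall fun x _ t _ =>
      ((hf.differentiable one_ne_zero (x + t)).hasDerivAt.comp_const_add x t).mul_const (P x)

theorem stmt_15_general (g : ℝ → ℝ) (hg : ContDiff ℝ 1 g)
    (heven : ∀ x, g (-x) = g x) (hper : ∀ x, g (x + π) = g x)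
    (n : ℕ) (μ : Fin n → ℝ) (i : Fin n) :
    HasDerivAt
      (fun t => (1 / π) * ∫ x in (-(π/2))..(π/2), ∏ j : Fin n, g (x + Function.update μ i t j))
      ((1 / (2 * π)) * ∫ x in (-(π/2))..(π/2),
        deriv g x * ((∏ j ∈ Finset.univ.erase i, g (x + μ j - μ i))
          - ∏ j ∈ Finset.univ.erase i, g (x - μ j + μ i)))
      (μ i) := by
  have hg_cont : Continuous g := hg.continuous
  have hg' : Continuous (deriv g) := hg.continuous_deriv le_rfl
  set P : ℝ → ℝ := fun x => ∏ j ∈ univ.erase i, g (x + μ j)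
  set A : ℝ → ℝ := fun x => deriv g x * ∏ j ∈ univ.erase i, g (x + μ j - μ i)
  have hA_periodic : Function.Periodic A π := fun x => by
    simp only [A, Function.Periodic.deriv hper x]
    congr 1
    refine prod_congr rfl fun j _ => ?_
    rw [← hper (x + μ j - μ i)]; ring_nf
  have hA_neg (x : ℝ) : A (-x) = -(deriv g x * ∏ j ∈ univ.erase i, g (x - μ j + μ i)) := by
    simp only [A, Function.Even.deriv heven x, neg_mul]
    congr 2
    refine prod_congr rfl fun j _ => ?_
    rw [← heven (x - μ j + μ i)]; ring_nf
  have hA_shift :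
      ∫ x in (-(π/2))..(π/2), A x = ∫ x in (-(π/2))..(π/2), deriv g (x + μ i) * P x := by
    have h := hA_periodic.intervalIntegral_comp_add_right (-(π/2)) (μ i)
    rw [show -(π/2) + π = π/2 by ring] at h
    rw [← h]
    refine integral_congr fun x _ => ?_
    simp only [A, P, add_sub_cancel_right, add_right_comm x (μ i)]
  have hvalue : (1 / (2 * π)) * ∫ x in (-(π/2))..(π/2),
        deriv g x * ((∏ j ∈ Finset.univ.erase i, g (x + μ j - μ i))
          - ∏ j ∈ Finset.univ.erase i, g (x - μ j + μ i)) =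
      (1 / π) * ∫ x in (-(π/2))..(π/2), deriv g (x + μ i) * P x := by
    have hA_cont : Continuous A := by fun_prop
    rw [integral_congr fun x _ => (by rw [hA_neg]; ring : _ = A x + A (-x)),
      integral_add_comp_neg (hA_cont.intervalIntegrable _ _), hA_shift, smul_eq_mul]
    field_simp
  rw [hvalue]
  simp only [fun t x => prod_comp_update_eq_mul_prod_erase (fun y => g (x + y)) μ i t]
  exact (hasDerivAt_intervalIntegral_comp_add_mul hg (by fun_prop) _ _ _).const_mul (1 / π)

theorem stmt_15 (g : ℝ → ℝ) (hg : ContDiff ℝ 1 g)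
    (heven : ∀ x, g (-x) = g x) (hper : ∀ x, g (x + π) = g x)
    (n : ℕ) (hn : 1 ≤ n) (μ : Fin n → ℝ) (i : Fin n) :
    HasDerivAt
      (fun t => (1 / π) * ∫ x in (-(π/2))..(π/2), ∏ j : Fin n, g (x + Function.update μ i t j))
      ((1 / (2 * π)) * ∫ x in (-(π/2))..(π/2),
        deriv g x * ((∏ j ∈ Finset.univ.erase i, g (x + μ j - μ i))
          - ∏ j ∈ Finset.univ.erase i, g (x - μ j + μ i)))
      (μ i) :=
  stmt_15_general g hg heven hper n μ i
end

section
/- Let g : ℝ → ℝ be continuously differentiable, even, and π-periodic, let n, m be positive integers, and set μ_i* = m·i·π/n for i = 0,…,n−1. Then for every i, the partial derivative ∂G/∂μ_i of G(μ₀,…,μ_{n−1}) = (1/π)∫_{-π/2}^{π/2} ∏_{i=0}^{n−1} g(x + μ_i) dx vanishes at the point (μ₀*,…,μ_{n−1}*). -/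
/-!
Differentiating under the integral sign, `G` is differentiable in `μ_i`. The substitution
`x ↦ -2μ_i* - x` turns the integrand at `μ_i = μ_i* - s` into the integrand at `μ_i* + s`:
`j ↦ 2i - j` permutes the indices, `μ*_{2i-j} ≡ 2μ_i* - μ*_j` modulo `π`, and `g` is even and
`π`-periodic. As the integrand is `π`-periodic in `x`, the integral over the reflected period is
the same, so `G` is symmetric about `μ_i*` and its derivative vanishes there.
-/

open Real MeasureTheory Function Set

theorem differentiableAt_intervalIntegral_of_contDiff {E : Type*} [NormedAddCommGroup E]
    [NormedSpace ℝ E] {F : ℝ → ℝ → E} (hF : ContDiff ℝ 1 (uncurry F)) (a b t₀ : ℝ) :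
    DifferentiableAt ℝ (fun t => ∫ x in a..b, F t x) t₀ := by
  set F' : ℝ → ℝ → E := fun t x => fderiv ℝ (uncurry F) (t, x) (1, 0)
  have hF'c : Continuous (uncurry F') :=
    (hF.continuous_fderiv one_ne_zero).clm_apply continuous_const
  have hFx : ∀ t, Continuous (F t) := fun t =>
    hF.continuous.comp (continuous_const.prodMk continuous_id)
  have hderiv : ∀ t x, HasDerivAt (fun t => F t x) (F' t x) t := fun t x =>
    ((hF.differentiable one_ne_zero).differentiableAt.hasFDerivAt).comp_hasDerivAt t
      ((hasDerivAt_id t).prodMk (hasDerivAt_const t x))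
  obtain ⟨C, hC⟩ := ((isCompact_closedBall t₀ 1).prod isCompact_uIcc).exists_bound_of_continuousOn
    (hF'c.continuousOn (s := Metric.closedBall t₀ 1 ×ˢ uIcc a b))
  refine (intervalIntegral.hasDerivAt_integral_of_dominated_loc_of_deriv_le (bound := fun _ => C)
    (Metric.ball_mem_nhds t₀ one_pos) (.of_forall fun t => (hFx t).aestronglyMeasurable)
    ((hFx t₀).intervalIntegrable a b)
    (hF'c.comp (continuous_const.prodMk continuous_id)).aestronglyMeasurable
    (.of_forall fun x hx t ht => hC (t, x) ⟨Metric.ball_subset_closedBall ht, uIoc_subset_uIcc hx⟩)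
    intervalIntegrable_const (.of_forall fun x _ t _ => hderiv t x)).2.differentiableAt

theorem DifferentiableAt.hasDerivAt_zero_of_symmetric {F : ℝ → ℝ} {c : ℝ}
    (hF : DifferentiableAt ℝ F c) (hsymm : ∀ s, F (c + s) = F (c - s)) : HasDerivAt F 0 c := by
  have hplus : HasDerivAt (fun s => F (c + s)) (deriv F c) 0 :=
    HasDerivAt.comp_const_add c 0 (by rw [add_zero]; exact hF.hasDerivAt)
  have hminus : HasDerivAt (fun s => F (c + s)) (-deriv F c) 0 := by
    rw [funext hsymm]
    exact HasDerivAt.comp_const_sub c 0 (by rw [sub_zero]; exact hF.hasDerivAt)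
  have : deriv F c = 0 := by linarith [hplus.unique hminus]
  exact this ▸ hF.hasDerivAt

theorem Function.Periodic.intervalIntegral_comp_sub_left {E : Type*} [NormedAddCommGroup E]
    [NormedSpace ℝ E] {f : ℝ → E} {T : ℝ} (hf : Periodic f T) (a d : ℝ) :
    ∫ x in a..a + T, f (d - x) = ∫ x in a..a + T, f x := by
  rw [intervalIntegral.integral_comp_sub_left, show d - a = d - (a + T) + T by ring,
    hf.intervalIntegral_add_eq]

theorem hasDerivAt_intervalIntegral_prod_update_of_reflection {ι : Type*} [Fintype ι]
    [DecidableEq ι] {g : ℝ → ℝ} {T : ℝ} (hg : ContDiff ℝ 1 g) (heven : Function.Even g)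
    (hper : Periodic g T) (μ : ι → ℝ) (i : ι) (σ : Equiv.Perm ι) (hσi : σ i = i)
    (hσ : ∀ j ≠ i, ∃ k : ℤ, μ (σ j) + μ j = 2 * μ i + k * T) (a : ℝ) :
    HasDerivAt (fun t => ∫ x in a..a + T, ∏ j, g (x + update μ i t j)) 0 (μ i) := by
  set P : ℝ → ℝ → ℝ := fun t x => ∏ j, g (x + update μ i t j)
  have hP : ContDiff ℝ 1 (uncurry P) := by
    refine contDiff_prod fun j _ => hg.comp (contDiff_snd.add ?_)
    exact (contDiff_apply ℝ ℝ j).comp ((contDiff_update 1 μ i).comp contDiff_fst)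
  have hPper : ∀ t, Periodic (P t) T := fun t x =>
    Finset.prod_congr rfl fun j _ => by rw [add_right_comm, hper]
  have hreflect : ∀ s x, P (μ i - s) x = P (μ i + s) (-(2 * μ i) - x) := by
    intro s x
    refine Eq.trans ?_ (Equiv.prod_comp σ _)
    refine Finset.prod_congr rfl fun j _ => ?_
    by_cases hj : j = i
    · subst hj
      rw [hσi, update_self, update_self, ← heven]
      ring_nf
    · obtain ⟨k, hk⟩ := hσ j hj
      have hσj : σ j ≠ i := by rwa [← hσi, σ.injective.ne_iff]
      rw [update_of_ne hj, update_of_ne hσj, ← heven, ← hper.int_mul k]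
      congr 1
      linarith
  have hdiff := differentiableAt_intervalIntegral_of_contDiff hP a (a + T) (μ i)
  refine hdiff.hasDerivAt_zero_of_symmetric fun s => ?_
  simp only [P] at hreflect ⊢
  simp only [hreflect]
  exact ((hPper _).intervalIntegral_comp_sub_left a _).symm

noncomputable def evenlySpaced (n m : ℕ) (T : ℝ) (j : Fin n) : ℝ := m * j * T / n

theorem evenlySpaced_sub_left_add {n : ℕ} [NeZero n] (m : ℕ) (T : ℝ) (i j : Fin n) :
    ∃ k : ℤ, evenlySpaced n m T (i + i - j) + evenlySpaced n m T j
      = 2 * evenlySpaced n m T i + k * T := by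
  have hmod : ((i + i - j : Fin n) : ℕ) + j ≡ i + i [MOD n] := by
    have := congrArg Fin.val (sub_add_cancel (i + i) j)
    rwa [Fin.val_add, Fin.val_add] at this
  obtain ⟨q, hq⟩ := Nat.modEq_iff_dvd.mp hmod
  have hq' : ((i : ℕ) : ℝ) + i - (((i + i - j : Fin n) : ℕ) + j) = n * q := by
    exact_mod_cast hq
  have hn : (n : ℝ) ≠ 0 := Nat.cast_ne_zero.mpr (NeZero.ne n)
  refine ⟨-(m * q), ?_⟩
  simp only [evenlySpaced]
  field_simp
  push_cast
  linear_combination (-(m : ℝ) * T) * hq'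

theorem stmt_16_general (g : ℝ → ℝ) (hg : ContDiff ℝ 1 g)
    (heven : ∀ x, g (-x) = g x) (hper : ∀ x, g (x + π) = g x)
    (n m : ℕ)
    (μstar : Fin n → ℝ) (hμ : ∀ i : Fin n, μstar i = m * i * π / n) (i : Fin n) :
    HasDerivAt
      (fun t => (1 / π) * ∫ x in (-(π/2))..(π/2), ∏ j : Fin n, g (x + Function.update μstar i t j))
      0 (μstar i) := by
  have : NeZero n := ⟨i.pos.ne'⟩
  obtain rfl : μstar = evenlySpaced n m π := funext hμ
  have h := hasDerivAt_intervalIntegral_prod_update_of_reflection hg heven hper _ i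
    (Equiv.subLeft (i + i)) (by simp) (fun j _ => evenlySpaced_sub_left_add m π i j) (-(π / 2))
  rw [show -(π / 2) + π = π / 2 by ring] at h
  simpa using h.const_mul (1 / π)

theorem stmt_16 (g : ℝ → ℝ) (hg : ContDiff ℝ 1 g)
    (heven : ∀ x, g (-x) = g x) (hper : ∀ x, g (x + π) = g x)
    (n m : ℕ) (hn : 0 < n) (hm : 0 < m)
    (μstar : Fin n → ℝ) (hμ : ∀ i : Fin n, μstar i = m * i * π / n) (i : Fin n) :
    HasDerivAt
      (fun t => (1 / π) * ∫ x in (-(π/2))..(π/2), ∏ j : Fin n, g (x + Function.update μstar i t j))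
      0 (μstar i) :=
  stmt_16_general g hg heven hper n m μstar hμ i
end
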